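/- Let G be an (s,k)-edge-connected graph with k ≥ 2 and deg(s) ≥ 4. Suppose I₁ and I₂ are maximal independent sets in L(G,s,k) of size at least 2 each, |I₁ ∩ I₂| = 1, and I₁ ∪ I₂ ≠ V(L(G,s,k)). Then k is odd; moreover, if A₁ and A₂ are dangerous sets corresponding to I₁ and I₂ respectively, then |δ(A₁)| = |δ(A₂)| = k+1, there are no edges between A₂\A₁ and A₁\A₂, there are no edges in G−s between A₁∩A₂ and the complement of A₁∪A₂, and |δ(A₂\A₁ : A₁∩A₂)| = |δ(A₁∩A₂ : A₁\A₂)| = (k−1)/2. -/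

import Mathlib

/-- A finite loopless multigraph. -/
structure Multigraph where
  V : Type
  E : Type
  [finV : Fintype V]
  [finE : Fintype E]
  [decV : DecidableEq V]
  [decE : DecidableEq E]
  ends : E → Sym2 V
  loopless : ∀ e, ¬ (ends e).IsDiag

attribute [instance] Multigraph.finV Multigraph.finE Multigraph.decV Multigraph.decE

namespace Multigraph

variable (G : Multigraph)

/-- Walks in a multigraph, recorded as lists of edges. -/
inductive IsWalk (G : Multigraph) : G.V → G.V → List G.E → Prop
  | nil (v : G.V) : IsWalk G v v []
  | cons {u v w : G.V} {e : G.E} {p : List G.E} :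
      G.ends e = s(u, v) → IsWalk G v w p → IsWalk G u w (e :: p)

/-- There exist `k` pairwise edge-disjoint paths from `u` to `v`. -/
def EdgeDisjointPaths (u v : G.V) (k : ℕ) : Prop :=
  ∃ P : Fin k → List G.E, (∀ i, G.IsWalk u v (P i)) ∧
    ∀ i j, i ≠ j → ∀ e, e ∈ P i → e ∉ P j

/-- There exist `k` pairwise edge-disjoint paths from `u` to `v` using only
edges with both ends in `B`. -/
def EdgeDisjointPathsWithin (B : Set G.V) (u v : G.V) (k : ℕ) : Prop :=
  ∃ P : Fin k → List G.E,
    (∀ i, G.IsWalk u v (P i) ∧ ∀ e ∈ P i, ∀ w ∈ G.ends e, w ∈ B) ∧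
    ∀ i j, i ≠ j → ∀ e, e ∈ P i → e ∉ P j

/-- `G` is `(s,k)`-edge-connected: it has at least three vertices and any two
vertices different from `s` are joined by `k` pairwise edge-disjoint paths. -/
def SKConnected (s : G.V) (k : ℕ) : Prop :=
  3 ≤ Fintype.card G.V ∧
    ∀ u v : G.V, u ≠ s → v ≠ s → G.EdgeDisjointPaths u v k

/-- The edge cut `δ(A)`: edges with exactly one end in `A`. -/
def cutSet (A : Set G.V) : Set G.E :=
  {e | ∃ u v, G.ends e = s(u, v) ∧ u ∈ A ∧ v ∉ A}

/-- `δ(A:B)`: edges with one end in `A` and the other in `B`. -/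
def between (A B : Set G.V) : Set G.E :=
  {e | ∃ u v, G.ends e = s(u, v) ∧ u ∈ A ∧ v ∈ B}

/-- The set of edges incident with `s`. -/
def incEdges (s : G.V) : Set G.E := {e | s ∈ G.ends e}

/-- The degree of `s`: the number of edges incident with `s` (counted with
multiplicity). -/
noncomputable def deg (s : G.V) : ℕ := (G.incEdges s).ncard

/-- The set of neighbours of `s`. -/
def neighborSet (s : G.V) : Set G.V := {v | ∃ e, G.ends e = s(s, v)}

/-- `A ⊆ V(G)\{s}` is `k`-dangerous if it is nonempty, misses some non-`s`
vertex, and `|δ(A)| ≤ k+1`. -/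
def Dangerous (s : G.V) (k : ℕ) (A : Set G.V) : Prop :=
  A.Nonempty ∧ s ∉ A ∧ (A ∪ {s})ᶜ.Nonempty ∧ (G.cutSet A).ncard ≤ k + 1

/-- The other end of an edge incident with `s` (junk value `s` otherwise). -/
def otherEnd (s : G.V) (e : G.E) : G.V :=
  if h : s ∈ G.ends e then Sym2.Mem.other' h else s

/-- The lift of `G` at `s` obtained from the pair of edges `e, f`: both are
deleted and an edge joining their other ends is added (no edge is added if the
other ends coincide, i.e. `e` and `f` are parallel). -/
def lift (s : G.V) (e f : G.E) : Multigraph where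
  V := G.V
  E := {x : G.E // x ≠ e ∧ x ≠ f} ⊕ PLift (G.otherEnd s e ≠ G.otherEnd s f)
  finV := inferInstance
  finE := by
    haveI : Fintype (PLift (G.otherEnd s e ≠ G.otherEnd s f)) := by
      by_cases h : G.otherEnd s e ≠ G.otherEnd s f
      · exact Fintype.ofSubsingleton ⟨h⟩
      · haveI : IsEmpty (PLift (G.otherEnd s e ≠ G.otherEnd s f)) := ⟨fun x => h x.down⟩
        exact Fintype.ofIsEmpty
    infer_instance
  decV := inferInstance
  decE := by
    haveI : DecidableEq (PLift (G.otherEnd s e ≠ G.otherEnd s f)) :=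
      fun a b => isTrue (Subsingleton.elim a b)
    infer_instance
  ends := fun x => match x with
    | Sum.inl y => G.ends y.1
    | Sum.inr _ => s(G.otherEnd s e, G.otherEnd s f)
  loopless := by
    rintro (y | h)
    · exact G.loopless y.1
    · simpa using h.down

/-- The pair of edges `e, f` at `s` is `k`-liftable if the lift of `G` at
`e, f` is still `(s,k)`-edge-connected. -/
def IsLiftable (s : G.V) (k : ℕ) (e f : G.E) : Prop :=
  (G.lift s e f).SKConnected s k ∧ (G.lift s f e).SKConnected s k

/-- The `k`-lifting graph `L(G,s,k)`: vertices are the edges incident with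
`s`, adjacent iff they form a `k`-liftable pair. -/
def liftingGraph (s : G.V) (k : ℕ) : SimpleGraph ↥(G.incEdges s) where
  Adj e f := e ≠ f ∧ G.IsLiftable s k e.1 f.1 ∧ G.IsLiftable s k f.1 e.1
  symm := ⟨fun a b h => ⟨h.1.symm, h.2.2, h.2.1⟩⟩
  loopless := ⟨fun a h => h.1 rfl⟩

/-- A dangerous set corresponding to an independent set `I` of the lifting
graph: it contains the non-`s` ends of all edges of `I`. -/
def CorrDangerous (s : G.V) (k : ℕ) (I : Set ↥(G.incEdges s)) (A : Set G.V) : Prop :=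
  G.Dangerous s k A ∧ ∀ e : ↥(G.incEdges s), e ∈ I → G.otherEnd s e.1 ∈ A

/-- A minimal dangerous set corresponding to `I`. -/
def MinCorrDangerous (s : G.V) (k : ℕ) (I : Set ↥(G.incEdges s)) (A : Set G.V) : Prop :=
  G.CorrDangerous s k I A ∧ ∀ B, G.CorrDangerous s k I B → B ⊆ A → B = A

/-- Reachability in a multigraph. -/
def Reachable (u v : G.V) : Prop := ∃ p, G.IsWalk u v p

/-- Reachability avoiding a set `F` of edges. -/
def ReachableOutside (F : Set G.E) (u v : G.V) : Prop :=
  ∃ p, G.IsWalk u v p ∧ ∀ e ∈ p, e ∉ F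

/-- Deleting the edge set `F` disconnects `G`. -/
def Disconnects (F : Set G.E) : Prop :=
  ∃ u v, G.Reachable u v ∧ ¬ G.ReachableOutside F u v

/-- A cut-edge: its deletion disconnects the graph. -/
def IsCutEdge (e : G.E) : Prop := G.Disconnects {e}

/-- A minimal edge-cut: an inclusion-minimal set of edges whose deletion
disconnects the graph. -/
def IsMinimalCut (F : Set G.E) : Prop :=
  G.Disconnects F ∧ ∀ F' ⊂ F, ¬ G.Disconnects F'

/-- `G` has an `(s,r)`-path structure with blobs `B 0, …, B (n-1)`. -/
def PathStructure (s : G.V) (r : ℕ) {n : ℕ} (B : Fin n → Set G.V) : Prop :=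
  3 ≤ n ∧
  (∀ i j, i ≠ j → Disjoint (B i) (B j)) ∧
  (⋃ i, B i) = {s}ᶜ ∧
  ∀ i : Fin n, ∀ h1 : 0 < i.1, ∀ h2 : i.1 < n - 1,
    (G.cutSet (B i)).ncard = 2 * r + 1 ∧
    (G.between (B i) {s}).ncard = 1 ∧
    (G.between (B i) (B ⟨i.1 - 1, by omega⟩)).ncard = r ∧
    (G.between (B i) (B ⟨i.1 + 1, by omega⟩)).ncard = r

end Multigraph

section SimpleGraphDefs

variable {α : Type*}

/-- `I` is an independent set of a simple graph. -/
def IndepSet (H : SimpleGraph α) (I : Set α) : Prop :=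
  ∀ a ∈ I, ∀ b ∈ I, ¬ H.Adj a b

/-- `I` is a maximal independent set. -/
def MaxIndepSet (H : SimpleGraph α) (I : Set α) : Prop :=
  IndepSet H I ∧ ∀ J, IndepSet H J → I ⊆ J → J = I

/-- The independence graph of `H`: vertices are the maximal independent sets
of `H`, adjacent iff they intersect. -/
def independenceGraph (H : SimpleGraph α) :
    SimpleGraph {I : Set α // MaxIndepSet H I} where
  Adj I J := I ≠ J ∧ (I.1 ∩ J.1).Nonempty
  symm := ⟨fun I J h => ⟨h.1.symm, by rw [Set.inter_comm]; exact h.2⟩⟩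
  loopless := ⟨fun I h => h.1 rfl⟩

/-- `H` is complete multipartite: non-adjacency is transitive. -/
def IsCompleteMultipartite (H : SimpleGraph α) : Prop :=
  Transitive fun a b => ¬ H.Adj a b

/-- `H` is a star: there is a centre adjacent to exactly the other vertices,
which are pairwise non-adjacent. -/
def IsStarGraph (H : SimpleGraph α) : Prop :=
  ∃ c : α, ∀ a b, H.Adj a b ↔ (a ≠ b ∧ (a = c ∨ b = c))

end SimpleGraphDefs
namespace LiftAux

open Multigraph

variable {G : Multigraph}

lemma sym2_rep (z : Sym2 G.V) : ∃ u v, z = s(u, v) :=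
  Sym2.ind (fun u v => ⟨u, v, rfl⟩) z

lemma walk_cross {A : Set G.V} {u v : G.V} {p : List G.E}
    (hw : G.IsWalk u v p) : u ∈ A → v ∉ A → ∃ e ∈ p, e ∈ G.cutSet A := by
  induction hw with
  | nil w => exact fun hu hv => absurd hu hv
  | cons he hw ih =>
    intro hu hv
    rename_i a b c e q
    by_cases hb : b ∈ A
    · obtain ⟨x, hx, hx2⟩ := ih hb hv
      exact ⟨x, List.mem_cons_of_mem _ hx, hx2⟩
    · exact ⟨e, List.mem_cons_self, ⟨a, b, he, hu, hb⟩⟩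

lemma cut_lower_paths {A : Set G.V} {u v : G.V} {k : ℕ}
    (h : G.EdgeDisjointPaths u v k) (hu : u ∈ A) (hv : v ∉ A) :
    k ≤ (G.cutSet A).ncard := by
  obtain ⟨P, hP, hd⟩ := h
  choose e he hce using fun i => walk_cross (hP i) hu hv
  have hinj : Function.Injective e := by
    intro i j hij
    by_contra hne
    exact hd i j hne (e i) (he i) (by rw [hij]; exact he j)
  calc k = (Finset.univ.image e).card := by
        rw [Finset.card_image_of_injective _ hinj, Finset.card_univ, Fintype.card_fin]
    _ = ((Finset.univ.image e : Finset G.E) : Set G.E).ncard := (Set.ncard_coe_finset _).symm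
    _ ≤ (G.cutSet A).ncard := by
        apply Set.ncard_le_ncard _ (Set.toFinite _)
        intro x hx
        simp only [Finset.coe_image, Set.mem_image, Finset.mem_coe, Finset.mem_univ] at hx
        obtain ⟨i, _, rfl⟩ := hx
        exact hce i

lemma cut_lower_conn {s : G.V} {k : ℕ} (hcon : G.SKConnected s k)
    {A : Set G.V} {u v : G.V} (hu : u ∈ A) (hs : s ∉ A) (hv : v ∉ A) (hvs : v ≠ s) :
    k ≤ (G.cutSet A).ncard :=
  cut_lower_paths (hcon.2 u v (fun h => hs (h ▸ hu)) hvs) hu hv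

lemma otherEnd_spec {s : G.V} {x : G.E} (hs : s ∈ G.ends x) :
    G.ends x = s(s, G.otherEnd s x) ∧ G.otherEnd s x ≠ s := by
  have h1 : G.otherEnd s x = Sym2.Mem.other' hs := dif_pos hs
  have h2 : G.ends x = s(s, G.otherEnd s x) := by rw [h1]; exact (Sym2.other_spec' hs).symm
  refine ⟨h2, fun h => G.loopless x ?_⟩
  rw [h2, h]
  exact Sym2.isDiag_iff_proj_eq.mpr rfl

lemma otherEnd_eq {s v : G.V} {x : G.E} (h : G.ends x = s(s, v)) (hv : v ≠ s) :
    G.otherEnd s x = v := by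
  have hs : s ∈ G.ends x := by rw [h]; exact Sym2.mem_mk_left _ _
  obtain ⟨h2, _⟩ := otherEnd_spec hs
  rw [h] at h2
  rcases Sym2.eq_iff.mp h2 with ⟨_, h4⟩ | ⟨_, h4⟩
  · exact h4.symm
  · exact absurd h4 hv

lemma inc_mem_cutSet {s : G.V} {x : G.E} {A : Set G.V} (hs : s ∈ G.ends x)
    (hA : G.otherEnd s x ∈ A) (hsA : s ∉ A) : x ∈ G.cutSet A :=
  ⟨G.otherEnd s x, s, by rw [(otherEnd_spec hs).1]; exact Sym2.eq_swap, hA, hsA⟩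

lemma lift_cut_le {s : G.V} {e f : G.E} {A : Set G.V} (hef : e ≠ f)
    (hes : s ∈ G.ends e) (hfs : s ∈ G.ends f)
    (hA1 : G.otherEnd s e ∈ A) (hA2 : G.otherEnd s f ∈ A) (hsA : s ∉ A) :
    ((G.lift s e f).cutSet A).ncard + 2 ≤ (G.cutSet A).ncard := by
  set H := G.lift s e f with hH
  let φ : H.E → G.E := fun x => match x with
    | Sum.inl y => y.1
    | Sum.inr _ => e
  have hnotin : ∀ pl, (Sum.inr pl : H.E) ∉ H.cutSet A := by
    rintro pl ⟨u, v, huv, hu, hv⟩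
    have h2 : s(G.otherEnd s e, G.otherEnd s f) = s(u, v) := huv
    rcases Sym2.eq_iff.mp h2 with ⟨h3, h4⟩ | ⟨h3, h4⟩
    · exact hv (h4 ▸ hA2)
    · exact hv (h3 ▸ hA1)
  have himg : φ '' (H.cutSet A) ⊆ G.cutSet A \ {e, f} := by
    rintro x ⟨y, hy, rfl⟩
    match y with
    | Sum.inl z =>
        obtain ⟨u, v, huv, hu, hv⟩ := hy
        refine ⟨⟨u, v, huv, hu, hv⟩, ?_⟩
        simp only [Set.mem_insert_iff, Set.mem_singleton_iff]
        push_neg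
        exact ⟨z.2.1, z.2.2⟩
    | Sum.inr pl => exact absurd hy (hnotin pl)
  have hinj : Set.InjOn φ (H.cutSet A) := by
    intro a ha b hb hab
    match a, b with
    | Sum.inl z1, Sum.inl z2 => exact congrArg Sum.inl (Subtype.ext hab)
    | Sum.inl z1, Sum.inr pl => exact absurd hb (hnotin pl)
    | Sum.inr pl, _ => exact absurd ha (hnotin pl)
  have hpair : ({e, f} : Set G.E) ⊆ G.cutSet A := by
    rintro x (rfl | rfl)
    · exact inc_mem_cutSet hes hA1 hsA
    · exact inc_mem_cutSet hfs hA2 hsA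
  have h1 : (H.cutSet A).ncard = (φ '' H.cutSet A).ncard :=
    (Set.ncard_image_of_injOn hinj).symm
  have h2 : (φ '' H.cutSet A).ncard ≤ (G.cutSet A \ {e, f}).ncard :=
    Set.ncard_le_ncard himg (Set.toFinite _)
  have h3 : (G.cutSet A \ {e, f}).ncard = (G.cutSet A).ncard - 2 := by
    rw [Set.ncard_diff hpair (Set.toFinite _), Set.ncard_pair hef]
  have h4 : 2 ≤ (G.cutSet A).ncard := by
    rw [← Set.ncard_pair hef]
    exact Set.ncard_le_ncard hpair (Set.toFinite _)
  have h5 : (H.cutSet A).ncard = ((G.lift s e f).cutSet A).ncard := rfl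
  omega

lemma adj_cut {s : G.V} {k : ℕ} {e f : ↥(G.incEdges s)}
    (hadj : (G.liftingGraph s k).Adj e f) {A : Set G.V}
    (h1 : G.otherEnd s e.1 ∈ A) (h2 : G.otherEnd s f.1 ∈ A) (hsA : s ∉ A)
    {v : G.V} (hv : v ∉ A) (hvs : v ≠ s) :
    k + 2 ≤ (G.cutSet A).ncard := by
  have hef : e.1 ≠ f.1 := fun h => hadj.1 (Subtype.ext h)
  have hcon : (G.lift s e.1 f.1).SKConnected s k := hadj.2.1.1
  have hu : G.otherEnd s e.1 ≠ s := (otherEnd_spec e.2).2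
  have hk : k ≤ ((G.lift s e.1 f.1).cutSet A).ncard :=
    cut_lower_paths (hcon.2 _ v hu hvs) h1 hv
  have := lift_cut_le hef e.2 f.2 h1 h2 hsA
  omega

end LiftAux
namespace LiftAux

inductive Lab : Type
  | S | X | Y | Z | W
deriving DecidableEq

instance : Fintype Lab := ⟨{.S, .X, .Y, .Z, .W}, fun x => by cases x <;> decide⟩

open Classical in
noncomputable def lab (G : Multigraph) (s : G.V) (A₁ A₂ : Set G.V) (v : G.V) : Lab :=
  if v = s then .S
  else if v ∈ A₁ then (if v ∈ A₂ then .Y else .X)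
  else if v ∈ A₂ then .Z else .W

noncomputable def lt (G : Multigraph) (s : G.V) (A₁ A₂ : Set G.V) (x : G.E) : Sym2 Lab :=
  (G.ends x).map (lab G s A₁ A₂)

section LabLemmas

variable {G : Multigraph} {s : G.V} {A₁ A₂ : Set G.V}

lemma lab_self : lab G s A₁ A₂ s = .S := by unfold lab; simp

lemma lab_S_iff {v : G.V} : lab G s A₁ A₂ v = .S ↔ v = s := by
  unfold lab; split_ifs <;> simp_all

lemma lab_X_iff {v : G.V} : lab G s A₁ A₂ v = .X ↔ (v ≠ s ∧ v ∈ A₁ ∧ v ∉ A₂) := by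
  unfold lab; split_ifs <;> simp_all

lemma lab_Y_iff {v : G.V} : lab G s A₁ A₂ v = .Y ↔ (v ≠ s ∧ v ∈ A₁ ∧ v ∈ A₂) := by
  unfold lab; split_ifs <;> simp_all

lemma lab_Z_iff {v : G.V} : lab G s A₁ A₂ v = .Z ↔ (v ≠ s ∧ v ∉ A₁ ∧ v ∈ A₂) := by
  unfold lab; split_ifs <;> simp_all

lemma lab_W_iff {v : G.V} : lab G s A₁ A₂ v = .W ↔ (v ≠ s ∧ v ∉ A₁ ∧ v ∉ A₂) := by
  unfold lab; split_ifs <;> simp_all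

lemma cut_eq_fiber (A : Set G.V) (LS : Finset Lab) (T : Finset (Sym2 Lab))
    (hA : ∀ w, w ∈ A ↔ lab G s A₁ A₂ w ∈ LS)
    (hT : ∀ l₁ l₂ : Lab, s(l₁, l₂) ∈ T ↔ ((l₁ ∈ LS ∧ l₂ ∉ LS) ∨ (l₂ ∈ LS ∧ l₁ ∉ LS))) :
    G.cutSet A = {x | lt G s A₁ A₂ x ∈ T} := by
  ext x
  constructor
  · rintro ⟨u, v, huv, hu, hv⟩
    have hx : lt G s A₁ A₂ x = s(lab G s A₁ A₂ u, lab G s A₁ A₂ v) := by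
      rw [lt, huv, Sym2.map_pair_eq]
    rw [Set.mem_setOf_eq, hx, hT]
    exact Or.inl ⟨(hA u).mp hu, fun hh => hv ((hA v).mpr hh)⟩
  · intro hx
    obtain ⟨u, v, huv⟩ := sym2_rep (G.ends x)
    rw [Set.mem_setOf_eq, lt, huv, Sym2.map_pair_eq] at hx
    rcases (hT _ _).mp hx with ⟨hl1, hl2⟩ | ⟨hl1, hl2⟩
    · exact ⟨u, v, huv, (hA u).mpr hl1, fun hh => hl2 ((hA v).mp hh)⟩
    · exact ⟨v, u, by rw [huv]; exact Sym2.eq_swap, (hA v).mpr hl1,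
        fun hh => hl2 ((hA u).mp hh)⟩

lemma between_eq_fiber (A B : Set G.V) (la lb : Lab)
    (hA : ∀ w, w ∈ A ↔ lab G s A₁ A₂ w = la) (hB : ∀ w, w ∈ B ↔ lab G s A₁ A₂ w = lb) :
    G.between A B = {x | lt G s A₁ A₂ x = s(la, lb)} := by
  ext x
  constructor
  · rintro ⟨u, v, huv, hu, hv⟩
    rw [Set.mem_setOf_eq, lt, huv, Sym2.map_pair_eq, (hA u).mp hu, (hB v).mp hv]
  · intro hx
    obtain ⟨u, v, huv⟩ := sym2_rep (G.ends x)
    rw [Set.mem_setOf_eq, lt, huv, Sym2.map_pair_eq] at hx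
    rcases Sym2.eq_iff.mp hx with ⟨hl1, hl2⟩ | ⟨hl1, hl2⟩
    · exact ⟨u, v, huv, (hA u).mpr hl1, (hB v).mpr hl2⟩
    · exact ⟨v, u, by rw [huv]; exact Sym2.eq_swap, (hA v).mpr hl2, (hB u).mpr hl1⟩

end LabLemmas

lemma ncard_fiber_sum {α β : Type*} [Fintype α] [DecidableEq β] (t : α → β) (T : Finset β) :
    {a | t a ∈ T}.ncard = ∑ τ ∈ T, {a | t a = τ}.ncard := by
  classical
  have h1 : {a | t a ∈ T} = ↑(Finset.univ.filter fun a => t a ∈ T) := by ext a; simp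
  rw [h1, Set.ncard_coe_finset,
    Finset.card_eq_sum_card_fiberwise (f := t) (s := Finset.univ.filter fun a => t a ∈ T) (t := T) (fun a ha => (Finset.mem_filter.mp ha).2)]
  refine Finset.sum_congr rfl fun τ hτ => ?_
  have h2 : {a | t a = τ} = ↑((Finset.univ.filter fun a => t a ∈ T).filter fun a => t a = τ) := by
    ext a
    simp only [Finset.coe_filter, Finset.mem_filter, Finset.mem_univ, true_and, Set.mem_setOf_eq]
    exact ⟨fun h => ⟨by rw [h]; exact hτ, h⟩, fun h => h.2⟩
  rw [h2, Set.ncard_coe_finset]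

end LiftAux
namespace LiftAux

lemma ncard_split {α β : Type*} [Fintype α] [DecidableEq β] (t : α → β) (τ : β)
    (T : Finset β) (hτ : τ ∉ T) :
    {a | t a ∈ insert τ T}.ncard = {a | t a = τ}.ncard + {a | t a ∈ T}.ncard := by
  have hset : {a | t a ∈ insert τ T} = {a | t a = τ} ∪ {a | t a ∈ T} := by
    ext a; simp [Finset.mem_insert]
  have hdis : Disjoint {a | t a = τ} {a | t a ∈ T} :=
    Set.disjoint_left.mpr fun a ha hb => hτ (ha ▸ hb)
  rw [hset, Set.ncard_union_eq hdis (Set.toFinite _) (Set.toFinite _)]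

lemma ncard_single {α β : Type*} [Fintype α] [DecidableEq β] (t : α → β) (τ : β) :
    {a | t a ∈ ({τ} : Finset β)}.ncard = {a | t a = τ}.ncard := by
  congr 1
  ext a; simp

lemma ncard_mem6 {α β : Type*} [Fintype α] [DecidableEq β] (t : α → β)
    {τ1 τ2 τ3 τ4 τ5 τ6 : β}
    (h : τ1 ∉ ({τ2, τ3, τ4, τ5, τ6} : Finset β) ∧ τ2 ∉ ({τ3, τ4, τ5, τ6} : Finset β) ∧
      τ3 ∉ ({τ4, τ5, τ6} : Finset β) ∧ τ4 ∉ ({τ5, τ6} : Finset β) ∧ τ5 ∉ ({τ6} : Finset β)) :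
    {a | t a ∈ ({τ1, τ2, τ3, τ4, τ5, τ6} : Finset β)}.ncard =
      {a | t a = τ1}.ncard + {a | t a = τ2}.ncard + {a | t a = τ3}.ncard +
      {a | t a = τ4}.ncard + {a | t a = τ5}.ncard + {a | t a = τ6}.ncard := by
  rw [ncard_split t τ1 {τ2, τ3, τ4, τ5, τ6} h.1, ncard_split t τ2 {τ3, τ4, τ5, τ6} h.2.1,
    ncard_split t τ3 {τ4, τ5, τ6} h.2.2.1, ncard_split t τ4 {τ5, τ6} h.2.2.2.1,
    ncard_split t τ5 {τ6} h.2.2.2.2, ncard_single]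
  omega

lemma ncard_mem4 {α β : Type*} [Fintype α] [DecidableEq β] (t : α → β)
    {τ1 τ2 τ3 τ4 : β}
    (h : τ1 ∉ ({τ2, τ3, τ4} : Finset β) ∧ τ2 ∉ ({τ3, τ4} : Finset β) ∧ τ3 ∉ ({τ4} : Finset β)) :
    {a | t a ∈ ({τ1, τ2, τ3, τ4} : Finset β)}.ncard =
      {a | t a = τ1}.ncard + {a | t a = τ2}.ncard + {a | t a = τ3}.ncard +
      {a | t a = τ4}.ncard := by
  rw [ncard_split t τ1 {τ2, τ3, τ4} h.1, ncard_split t τ2 {τ3, τ4} h.2.1,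
    ncard_split t τ3 {τ4} h.2.2, ncard_single]
  omega

end LiftAux
open LiftAux

/-- structure around two intersecting maximal independent sets
whose union is not everything. -/
theorem two_intersecting_maxIndep (G : Multigraph) (s : G.V) (k : ℕ)
    (hk : 2 ≤ k) (hdeg : 4 ≤ G.deg s) (hcon : G.SKConnected s k)
    (I₁ I₂ : Set ↥(G.incEdges s))
    (h₁ : MaxIndepSet (G.liftingGraph s k) I₁)
    (h₂ : MaxIndepSet (G.liftingGraph s k) I₂)
    (hc₁ : 2 ≤ I₁.ncard) (hc₂ : 2 ≤ I₂.ncard)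
    (hint : (I₁ ∩ I₂).ncard = 1) (hun : I₁ ∪ I₂ ≠ Set.univ)
    (A₁ A₂ : Set G.V)
    (hA₁ : G.Dangerous s k A₁ ∧ ∀ e : ↥(G.incEdges s), e ∈ I₁ ↔ G.otherEnd s e.1 ∈ A₁)
    (hA₂ : G.Dangerous s k A₂ ∧ ∀ e : ↥(G.incEdges s), e ∈ I₂ ↔ G.otherEnd s e.1 ∈ A₂) :
    Odd k ∧
    (G.cutSet A₁).ncard = k + 1 ∧ (G.cutSet A₂).ncard = k + 1 ∧
    G.between (A₂ \ A₁) (A₁ \ A₂) = ∅ ∧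
    G.between (A₁ ∩ A₂) (A₁ ∪ A₂ ∪ {s})ᶜ = ∅ ∧
    (G.between (A₂ \ A₁) (A₁ ∩ A₂)).ncard = (k - 1) / 2 ∧
    (G.between (A₁ ∩ A₂) (A₁ \ A₂)).ncard = (k - 1) / 2 := by
  classical
  obtain ⟨hD₁, hI₁⟩ := hA₁
  obtain ⟨hD₂, hI₂⟩ := hA₂
  have hsA1 : s ∉ A₁ := hD₁.2.1
  have hsA2 : s ∉ A₂ := hD₂.2.1
  -- special vertices in each of the four classes
  obtain ⟨e₀, he₀⟩ : (I₁ ∩ I₂).Nonempty := Set.nonempty_of_ncard_ne_zero (by omega)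
  have hy₁ : G.otherEnd s e₀.1 ∈ A₁ := (hI₁ e₀).mp he₀.1
  have hy₂ : G.otherEnd s e₀.1 ∈ A₂ := (hI₂ e₀).mp he₀.2
  have hI₁sub : ¬ I₁ ⊆ I₂ := by
    intro h
    rw [Set.inter_eq_left.mpr h] at hint
    omega
  obtain ⟨eX, heX₁, heX₂⟩ := Set.not_subset.mp hI₁sub
  have hx₁ : G.otherEnd s eX.1 ∈ A₁ := (hI₁ eX).mp heX₁
  have hx₂ : G.otherEnd s eX.1 ∉ A₂ := fun h => heX₂ ((hI₂ eX).mpr h)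
  have hI₂sub : ¬ I₂ ⊆ I₁ := by
    intro h
    rw [Set.inter_eq_right.mpr h] at hint
    omega
  obtain ⟨eZ, heZ₂, heZ₁⟩ := Set.not_subset.mp hI₂sub
  have hz₂ : G.otherEnd s eZ.1 ∈ A₂ := (hI₂ eZ).mp heZ₂
  have hz₁ : G.otherEnd s eZ.1 ∉ A₁ := fun h => heZ₁ ((hI₁ eZ).mpr h)
  obtain ⟨g, hg⟩ := (Set.ne_univ_iff_exists_notMem _).mp hun
  have hw₁ : G.otherEnd s g.1 ∉ A₁ := fun h => hg (Or.inl ((hI₁ g).mpr h))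
  have hw₂ : G.otherEnd s g.1 ∉ A₂ := fun h => hg (Or.inr ((hI₂ g).mpr h))
  have hws : G.otherEnd s g.1 ≠ s := (otherEnd_spec g.2).2
  -- an adjacency between I₁ and I₂ \ I₁
  obtain ⟨ea, hea, hadj⟩ : ∃ e ∈ I₁, (G.liftingGraph s k).Adj e eZ := by
    by_contra hcontra
    push_neg at hcontra
    have hind : IndepSet (G.liftingGraph s k) (I₁ ∪ {eZ}) := by
      rintro a (ha | ha) b (hb | hb)
      · exact h₁.1 a ha b hb
      · rw [Set.mem_singleton_iff] at hb; subst hb; exact hcontra a ha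
      · rw [Set.mem_singleton_iff] at ha; subst ha
        exact fun hadj => hcontra b hb hadj.symm
      · rw [Set.mem_singleton_iff] at ha hb; subst ha; subst hb
        exact (G.liftingGraph s k).irrefl
    have heq := h₁.2 _ hind Set.subset_union_left
    exact heZ₁ (heq ▸ (Set.mem_union_right _ rfl : eZ ∈ I₁ ∪ {eZ}))
  -- label class descriptions
  have hmX : ∀ w, w ∈ A₁ \ A₂ ↔ lab G s A₁ A₂ w = Lab.X := by
    intro w
    rw [lab_X_iff]
    exact ⟨fun h => ⟨fun hh => hsA1 (hh ▸ h.1), h.1, h.2⟩, fun h => ⟨h.2.1, h.2.2⟩⟩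
  have hmY : ∀ w, w ∈ A₁ ∩ A₂ ↔ lab G s A₁ A₂ w = Lab.Y := by
    intro w
    rw [lab_Y_iff]
    exact ⟨fun h => ⟨fun hh => hsA1 (hh ▸ h.1), h.1, h.2⟩, fun h => ⟨h.2.1, h.2.2⟩⟩
  have hmZ : ∀ w, w ∈ A₂ \ A₁ ↔ lab G s A₁ A₂ w = Lab.Z := by
    intro w
    rw [lab_Z_iff]
    exact ⟨fun h => ⟨fun hh => hsA2 (hh ▸ h.1), h.2, h.1⟩, fun h => ⟨h.2.2, h.2.1⟩⟩
  have hmW : ∀ w, w ∈ (A₁ ∪ A₂ ∪ {s})ᶜ ↔ lab G s A₁ A₂ w = Lab.W := by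
    intro w
    rw [lab_W_iff]
    simp only [Set.mem_compl_iff, Set.mem_union, Set.mem_singleton_iff, not_or]
    tauto
  have hm1 : ∀ w, w ∈ A₁ ↔ lab G s A₁ A₂ w ∈ ({Lab.X, Lab.Y} : Finset Lab) := by
    intro w
    simp only [Finset.mem_insert, Finset.mem_singleton, lab_X_iff, lab_Y_iff]
    constructor
    · intro hw
      have hwn : w ≠ s := fun hh => hsA1 (hh ▸ hw)
      by_cases h2 : w ∈ A₂
      · exact Or.inr ⟨hwn, hw, h2⟩
      · exact Or.inl ⟨hwn, hw, h2⟩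
    · rintro (⟨_, h, _⟩ | ⟨_, h, _⟩) <;> exact h
  have hm2 : ∀ w, w ∈ A₂ ↔ lab G s A₁ A₂ w ∈ ({Lab.Y, Lab.Z} : Finset Lab) := by
    intro w
    simp only [Finset.mem_insert, Finset.mem_singleton, lab_Y_iff, lab_Z_iff]
    constructor
    · intro hw
      have hwn : w ≠ s := fun hh => hsA2 (hh ▸ hw)
      by_cases h1 : w ∈ A₁
      · exact Or.inl ⟨hwn, h1, hw⟩
      · exact Or.inr ⟨hwn, h1, hw⟩
    · rintro (⟨_, _, h⟩ | ⟨_, _, h⟩) <;> exact h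
  have hmU : ∀ w, w ∈ A₁ ∪ A₂ ↔ lab G s A₁ A₂ w ∈ ({Lab.X, Lab.Y, Lab.Z} : Finset Lab) := by
    intro w
    simp only [Finset.mem_insert, Finset.mem_singleton, lab_X_iff, lab_Y_iff, lab_Z_iff]
    constructor
    · intro hw
      have hwn : w ≠ s := by rintro rfl; rcases hw with h | h; exacts [hsA1 h, hsA2 h]
      rcases hw with h | h
      · by_cases h2 : w ∈ A₂
        · exact Or.inr (Or.inl ⟨hwn, h, h2⟩)
        · exact Or.inl ⟨hwn, h, h2⟩
      · by_cases h1 : w ∈ A₁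
        · exact Or.inr (Or.inl ⟨hwn, h1, h⟩)
        · exact Or.inr (Or.inr ⟨hwn, h1, h⟩)
    · rintro (⟨_, h, _⟩ | ⟨_, h, _⟩ | ⟨_, _, h⟩)
      exacts [Or.inl h, Or.inl h, Or.inr h]
  have hmYs : ∀ w, w ∈ A₁ ∩ A₂ ↔ lab G s A₁ A₂ w ∈ ({Lab.Y} : Finset Lab) := fun w => by
    rw [Finset.mem_singleton]; exact hmY w
  have hmXs : ∀ w, w ∈ A₁ \ A₂ ↔ lab G s A₁ A₂ w ∈ ({Lab.X} : Finset Lab) := fun w => by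
    rw [Finset.mem_singleton]; exact hmX w
  have hmZs : ∀ w, w ∈ A₂ \ A₁ ↔ lab G s A₁ A₂ w ∈ ({Lab.Z} : Finset Lab) := fun w => by
    rw [Finset.mem_singleton]; exact hmZ w
  -- the six cut identities
  have c1 : (G.cutSet A₁).ncard =
      {x | lt G s A₁ A₂ x = s(Lab.S, Lab.X)}.ncard + {x | lt G s A₁ A₂ x = s(Lab.S, Lab.Y)}.ncard +
      {x | lt G s A₁ A₂ x = s(Lab.X, Lab.Z)}.ncard + {x | lt G s A₁ A₂ x = s(Lab.X, Lab.W)}.ncard +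
      {x | lt G s A₁ A₂ x = s(Lab.Y, Lab.Z)}.ncard + {x | lt G s A₁ A₂ x = s(Lab.Y, Lab.W)}.ncard := by
    rw [cut_eq_fiber A₁ {Lab.X, Lab.Y}
      {s(Lab.S, Lab.X), s(Lab.S, Lab.Y), s(Lab.X, Lab.Z), s(Lab.X, Lab.W), s(Lab.Y, Lab.Z), s(Lab.Y, Lab.W)}
      hm1 (by decide)]
    exact ncard_mem6 _ (by decide)
  have c2 : (G.cutSet A₂).ncard =
      {x | lt G s A₁ A₂ x = s(Lab.S, Lab.Y)}.ncard + {x | lt G s A₁ A₂ x = s(Lab.S, Lab.Z)}.ncard +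
      {x | lt G s A₁ A₂ x = s(Lab.X, Lab.Y)}.ncard + {x | lt G s A₁ A₂ x = s(Lab.X, Lab.Z)}.ncard +
      {x | lt G s A₁ A₂ x = s(Lab.Y, Lab.W)}.ncard + {x | lt G s A₁ A₂ x = s(Lab.Z, Lab.W)}.ncard := by
    rw [cut_eq_fiber A₂ {Lab.Y, Lab.Z}
      {s(Lab.S, Lab.Y), s(Lab.S, Lab.Z), s(Lab.X, Lab.Y), s(Lab.X, Lab.Z), s(Lab.Y, Lab.W), s(Lab.Z, Lab.W)}
      hm2 (by decide)]
    exact ncard_mem6 _ (by decide)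
  have cY : (G.cutSet (A₁ ∩ A₂)).ncard =
      {x | lt G s A₁ A₂ x = s(Lab.S, Lab.Y)}.ncard + {x | lt G s A₁ A₂ x = s(Lab.X, Lab.Y)}.ncard +
      {x | lt G s A₁ A₂ x = s(Lab.Y, Lab.Z)}.ncard + {x | lt G s A₁ A₂ x = s(Lab.Y, Lab.W)}.ncard := by
    rw [cut_eq_fiber (A₁ ∩ A₂) {Lab.Y}
      {s(Lab.S, Lab.Y), s(Lab.X, Lab.Y), s(Lab.Y, Lab.Z), s(Lab.Y, Lab.W)} hmYs (by decide)]
    exact ncard_mem4 _ (by decide)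
  have cU : (G.cutSet (A₁ ∪ A₂)).ncard =
      {x | lt G s A₁ A₂ x = s(Lab.S, Lab.X)}.ncard + {x | lt G s A₁ A₂ x = s(Lab.S, Lab.Y)}.ncard +
      {x | lt G s A₁ A₂ x = s(Lab.S, Lab.Z)}.ncard + {x | lt G s A₁ A₂ x = s(Lab.X, Lab.W)}.ncard +
      {x | lt G s A₁ A₂ x = s(Lab.Y, Lab.W)}.ncard + {x | lt G s A₁ A₂ x = s(Lab.Z, Lab.W)}.ncard := by
    rw [cut_eq_fiber (A₁ ∪ A₂) {Lab.X, Lab.Y, Lab.Z}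
      {s(Lab.S, Lab.X), s(Lab.S, Lab.Y), s(Lab.S, Lab.Z), s(Lab.X, Lab.W), s(Lab.Y, Lab.W), s(Lab.Z, Lab.W)}
      hmU (by decide)]
    exact ncard_mem6 _ (by decide)
  have cX : (G.cutSet (A₁ \ A₂)).ncard =
      {x | lt G s A₁ A₂ x = s(Lab.S, Lab.X)}.ncard + {x | lt G s A₁ A₂ x = s(Lab.X, Lab.Y)}.ncard +
      {x | lt G s A₁ A₂ x = s(Lab.X, Lab.Z)}.ncard + {x | lt G s A₁ A₂ x = s(Lab.X, Lab.W)}.ncard := by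
    rw [cut_eq_fiber (A₁ \ A₂) {Lab.X}
      {s(Lab.S, Lab.X), s(Lab.X, Lab.Y), s(Lab.X, Lab.Z), s(Lab.X, Lab.W)} hmXs (by decide)]
    exact ncard_mem4 _ (by decide)
  have cZ : (G.cutSet (A₂ \ A₁)).ncard =
      {x | lt G s A₁ A₂ x = s(Lab.S, Lab.Z)}.ncard + {x | lt G s A₁ A₂ x = s(Lab.X, Lab.Z)}.ncard +
      {x | lt G s A₁ A₂ x = s(Lab.Y, Lab.Z)}.ncard + {x | lt G s A₁ A₂ x = s(Lab.Z, Lab.W)}.ncard := by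
    rw [cut_eq_fiber (A₂ \ A₁) {Lab.Z}
      {s(Lab.S, Lab.Z), s(Lab.X, Lab.Z), s(Lab.Y, Lab.Z), s(Lab.Z, Lab.W)} hmZs (by decide)]
    exact ncard_mem4 _ (by decide)
  -- the unique edge from s into A₁ ∩ A₂
  have hSY : {x | lt G s A₁ A₂ x = s(Lab.S, Lab.Y)}.ncard = 1 := by
    have him : Subtype.val '' (I₁ ∩ I₂) = {x | lt G s A₁ A₂ x = s(Lab.S, Lab.Y)} := by
      ext x
      simp only [Set.mem_image, Set.mem_setOf_eq]
      constructor
      · rintro ⟨e, ⟨he1, he2⟩, rfl⟩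
        obtain ⟨hsp, hne⟩ := otherEnd_spec e.2
        rw [lt, hsp, Sym2.map_pair_eq, lab_self,
          lab_Y_iff.mpr ⟨hne, (hI₁ e).mp he1, (hI₂ e).mp he2⟩]
      · intro hx
        obtain ⟨u, v, huv⟩ := sym2_rep (G.ends x)
        rw [lt, huv, Sym2.map_pair_eq] at hx
        rcases Sym2.eq_iff.mp hx with ⟨h1, h2⟩ | ⟨h1, h2⟩
        · obtain ⟨hvs', hv1, hv2⟩ := lab_Y_iff.mp h2
          have hu : u = s := lab_S_iff.mp h1
          have huv' : G.ends x = s(s, v) := by rw [huv, hu]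
          have hmem : x ∈ G.incEdges s := show s ∈ G.ends x by
            rw [huv']; exact Sym2.mem_mk_left _ _
          have hoe : G.otherEnd s x = v := otherEnd_eq huv' hvs'
          exact ⟨⟨x, hmem⟩, ⟨(hI₁ ⟨x, hmem⟩).mpr (show G.otherEnd s x ∈ A₁ by rw [hoe]; exact hv1),
            (hI₂ ⟨x, hmem⟩).mpr (show G.otherEnd s x ∈ A₂ by rw [hoe]; exact hv2)⟩, rfl⟩
        · obtain ⟨hus', hu1, hu2⟩ := lab_Y_iff.mp h1
          have hv : v = s := lab_S_iff.mp h2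
          have huv' : G.ends x = s(s, u) := by rw [huv, hv]; exact Sym2.eq_swap
          have hmem : x ∈ G.incEdges s := show s ∈ G.ends x by
            rw [huv']; exact Sym2.mem_mk_left _ _
          have hoe : G.otherEnd s x = u := otherEnd_eq huv' hus'
          exact ⟨⟨x, hmem⟩, ⟨(hI₁ ⟨x, hmem⟩).mpr (show G.otherEnd s x ∈ A₁ by rw [hoe]; exact hu1),
            (hI₂ ⟨x, hmem⟩).mpr (show G.otherEnd s x ∈ A₂ by rw [hoe]; exact hu2)⟩, rfl⟩
    rw [← him, Set.ncard_image_of_injective _ Subtype.val_injective]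
    exact hint
  -- upper bounds from dangerousness
  have hub1 : (G.cutSet A₁).ncard ≤ k + 1 := hD₁.2.2.2
  have hub2 : (G.cutSet A₂).ncard ≤ k + 1 := hD₂.2.2.2
  -- lower bounds from connectivity
  have lY : k ≤ (G.cutSet (A₁ ∩ A₂)).ncard :=
    cut_lower_conn hcon ⟨hy₁, hy₂⟩ (fun h => hsA1 h.1) (fun h => hw₁ h.1) hws
  have lX : k ≤ (G.cutSet (A₁ \ A₂)).ncard :=
    cut_lower_conn hcon ⟨hx₁, hx₂⟩ (fun h => hsA1 h.1) (fun h => hw₁ h.1) hws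
  have lZ : k ≤ (G.cutSet (A₂ \ A₁)).ncard :=
    cut_lower_conn hcon ⟨hz₂, hz₁⟩ (fun h => hsA2 h.1) (fun h => hw₂ h.1) hws
  have lU : k + 2 ≤ (G.cutSet (A₁ ∪ A₂)).ncard :=
    adj_cut hadj (Or.inl ((hI₁ ea).mp hea)) (Or.inr hz₂)
      (fun h => Or.elim h hsA1 hsA2) (fun h => Or.elim h hw₁ hw₂) hws
  -- conclusion
  refine ⟨⟨{x | lt G s A₁ A₂ x = s(Lab.X, Lab.Y)}.ncard, by omega⟩, by omega, by omega, ?_, ?_, ?_, ?_⟩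
  · rw [between_eq_fiber (A₂ \ A₁) (A₁ \ A₂) Lab.Z Lab.X hmZ hmX,
      show (s(Lab.Z, Lab.X) : Sym2 Lab) = s(Lab.X, Lab.Z) from Sym2.eq_swap]
    exact (Set.ncard_eq_zero (Set.toFinite _)).mp (by omega)
  · rw [between_eq_fiber (A₁ ∩ A₂) ((A₁ ∪ A₂ ∪ {s})ᶜ) Lab.Y Lab.W hmY hmW]
    exact (Set.ncard_eq_zero (Set.toFinite _)).mp (by omega)
  · rw [between_eq_fiber (A₂ \ A₁) (A₁ ∩ A₂) Lab.Z Lab.Y hmZ hmY,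
      show (s(Lab.Z, Lab.Y) : Sym2 Lab) = s(Lab.Y, Lab.Z) from Sym2.eq_swap]
    omega
  · rw [between_eq_fiber (A₁ ∩ A₂) (A₁ \ A₂) Lab.Y Lab.X hmY hmX,
      show (s(Lab.Y, Lab.X) : Sym2 Lab) = s(Lab.X, Lab.Y) from Sym2.eq_swap]
    omega
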